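/- Let X be a proper metric space, ρ : C₀(X) → B(H) a nondegenerate representation, and Y ⊆ X a closed subset with inclusion isometry V : H_Y → H. If T ∈ B(H_Y) is locally compact and has finite propagation with respect to the induced representation ρ_Y : C₀(Y) → B(H_Y), then Ad(V)(T) = V T V* ∈ B(H) is locally compact and has finite propagation with respect to ρ; moreover, if T is a compact operator then V T V* is a compact operator. -/

import Mathlib

open scoped ZeroAtInfty
open ContinuousLinearMap

/-- For a representation `ρ : C₀(X) → B(H)` and a subset `Y ⊆ X`, the subspace `H_{I(Y)}`:
the closure of the linear span of `{ρ(f)v : f ∈ I(Y), v ∈ H}`, where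
`I(Y) = {f ∈ C₀(X) : f(y) = 0 for all y ∈ Y}`. -/
noncomputable def HI {X H : Type*} [MetricSpace X]
    [NormedAddCommGroup H] [InnerProductSpace ℂ H] [CompleteSpace H]
    (ρ : C₀(X, ℂ) →⋆ₙₐ[ℂ] (H →L[ℂ] H)) (Y : Set X) : Submodule ℂ H :=
  (Submodule.span ℂ
    {w : H | ∃ f : C₀(X, ℂ), (∀ y ∈ Y, f y = 0) ∧ ∃ v : H, w = ρ f v}).topologicalClosure

/-- `H_Y = H_{I(Y)}ᗮ` is a closed subspace of `H`, hence itself a Hilbert space. -/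
instance {X H : Type*} [MetricSpace X]
    [NormedAddCommGroup H] [InnerProductSpace ℂ H] [CompleteSpace H]
    (ρ : C₀(X, ℂ) →⋆ₙₐ[ℂ] (H →L[ℂ] H)) (Y : Set X) :
    CompleteSpace ↥(HI ρ Y)ᗮ :=
  (HI ρ Y).isClosed_orthogonal.completeSpace_coe

instance {X H : Type*} [MetricSpace X]
    [NormedAddCommGroup H] [InnerProductSpace ℂ H] [CompleteSpace H]
    (ρ : C₀(X, ℂ) →⋆ₙₐ[ℂ] (H →L[ℂ] H)) (Y : Set X) :
    Submodule.HasOrthogonalProjection (HI ρ Y)ᗮ := by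
  haveI : CompleteSpace (HI ρ Y) :=
    (Submodule.isClosed_topologicalClosure _).completeSpace_coe
  infer_instance

/-- A representation `ρ : C₀(X) → B(H)` is nondegenerate if the closed linear span of
`{ρ(f)v : f ∈ C₀(X), v ∈ H}` equals `H`. -/
def Nondegenerate {X H : Type*} [MetricSpace X]
    [NormedAddCommGroup H] [InnerProductSpace ℂ H] [CompleteSpace H]
    (ρ : C₀(X, ℂ) →⋆ₙₐ[ℂ] (H →L[ℂ] H)) : Prop :=
  (Submodule.span ℂ {w : H | ∃ f : C₀(X, ℂ), ∃ v : H, w = ρ f v}).topologicalClosure = ⊤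

/-- An operator `T ∈ B(H)` is locally compact with respect to `ρ` if `ρ(f)T` and `Tρ(f)` are
compact operators for every `f ∈ C₀(X)`. -/
def LocallyCompactOp {X H : Type*} [MetricSpace X]
    [NormedAddCommGroup H] [InnerProductSpace ℂ H] [CompleteSpace H]
    (ρ : C₀(X, ℂ) →⋆ₙₐ[ℂ] (H →L[ℂ] H)) (T : H →L[ℂ] H) : Prop :=
  ∀ f : C₀(X, ℂ), IsCompactOperator ⇑(ρ f ∘L T) ∧ IsCompactOperator ⇑(T ∘L ρ f)

/-- An operator `T ∈ B(H)` has finite propagation with respect to `ρ` if there exists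
`R > 0` such that `ρ(f) T ρ(g) = 0` for all `f, g ∈ C₀(X)` with `d(x, y) > R` for every
`x ∈ supp f` and `y ∈ supp g`. -/
def FinitePropagation {X H : Type*} [MetricSpace X]
    [NormedAddCommGroup H] [InnerProductSpace ℂ H] [CompleteSpace H]
    (ρ : C₀(X, ℂ) →⋆ₙₐ[ℂ] (H →L[ℂ] H)) (T : H →L[ℂ] H) : Prop :=
  ∃ R > (0 : ℝ), ∀ f g : C₀(X, ℂ),
    (∀ x ∈ Function.support ⇑f, ∀ y ∈ Function.support ⇑g, R < dist x y) →
    ρ f ∘L T ∘L ρ g = 0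

/-!
If `a ∈ C₀(X)` restricts to `f ∈ C₀(Y)` (this needs `Y` closed), then `ρ(a)` acts on `H_Y` as
`ρ_Y(f)`, and it preserves `H_Y^⊥ = H_{I(Y)}` because `I(Y)` is an ideal. Hence `ρ(a) V = V ρ_Y(f)`
and `V* ρ(a) = ρ_Y(f) V*`, so `ρ(a) (V T V*) ρ(b) = V (ρ_Y(f) T ρ_Y(g)) V*`, and every property
of `T` in question passes to `V T V*`.
-/

theorem Submodule.orthogonalProjectionOnto_comp_eq_of_comp_subtypeL {𝕜 E : Type*} [RCLike 𝕜]
    [NormedAddCommGroup E] [InnerProductSpace 𝕜 E] (K : Submodule 𝕜 E)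
    [K.HasOrthogonalProjection] {A : E →L[𝕜] E} {B : K →L[𝕜] K}
    (hAB : A ∘L K.subtypeL = K.subtypeL ∘L B) (hA : ∀ w ∈ Kᗮ, A w ∈ Kᗮ) :
    K.orthogonalProjectionOnto ∘L A = B ∘L K.orthogonalProjectionOnto := by
  ext w
  change K.starProjection (A w) = B (K.orthogonalProjectionOnto w)
  refine K.eq_starProjection_of_mem_orthogonal (B _).2 ?_
  have hBw : (B (K.orthogonalProjectionOnto w) : E) = A (K.starProjection w) :=
    (congrArg (· (K.orthogonalProjectionOnto w)) hAB).symm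
  rw [hBw]
  simpa only [map_sub] using hA _ (K.sub_starProjection_mem_orthogonal w)

theorem IsCompactOperator.subtypeL_comp_comp_orthogonalProjectionOnto {𝕜 E : Type*} [RCLike 𝕜]
    [NormedAddCommGroup E] [InnerProductSpace 𝕜 E] {K : Submodule 𝕜 E}
    [K.HasOrthogonalProjection] {T : K →L[𝕜] K} (hT : IsCompactOperator T) :
    IsCompactOperator (K.subtypeL ∘L T ∘L K.orthogonalProjectionOnto) := by
  rw [coe_comp, coe_comp]
  exact (hT.comp_clm _).clm_comp _

def IsClosed.subtypeValCocompactMap {X : Type*} [TopologicalSpace X] {Y : Set X}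
    (hY : IsClosed Y) : CocompactMap Y X :=
  ⟨⟨Subtype.val, continuous_subtype_val⟩, hY.isClosedEmbedding_subtypeVal.tendsto_cocompact⟩

section InducedRepresentation

variable {X H : Type*} [MetricSpace X]
  [NormedAddCommGroup H] [InnerProductSpace ℂ H] [CompleteSpace H]
  {ρ : C₀(X, ℂ) →⋆ₙₐ[ℂ] (H →L[ℂ] H)} {Y : Set X}

instance : CompleteSpace (HI ρ Y) :=
  (Submodule.isClosed_topologicalClosure _).completeSpace_coe

theorem apply_mem_HI (a : C₀(X, ℂ)) {w : H} (hw : w ∈ HI ρ Y) : ρ a w ∈ HI ρ Y := by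
  suffices HI ρ Y ≤ (HI ρ Y).comap (ρ a : H →ₗ[ℂ] H) from this hw
  refine Submodule.topologicalClosure_minimal _ ?_
    ((Submodule.isClosed_topologicalClosure _).preimage (ρ a).continuous)
  rw [Submodule.span_le]
  rintro _ ⟨f, hf, v, rfl⟩
  refine Submodule.le_topologicalClosure _ (Submodule.subset_span ?_)
  exact ⟨a * f, fun y hy => by simp [hf y hy], v, by rw [map_mul]; rfl⟩

variable (hY : IsClosed Y) {ρY : C₀(↥Y, ℂ) →⋆ₙₐ[ℂ] (↥(HI ρ Y)ᗮ →L[ℂ] ↥(HI ρ Y)ᗮ)}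
  (hcompat : ∀ (f : C₀(↥Y, ℂ)) (a : C₀(X, ℂ)), (∀ y : Y, f y = a y) →
    ∀ v : ↥(HI ρ Y)ᗮ, (ρY f v : H) = ρ a ↑v)
include hY hcompat

theorem comp_subtypeL_HI_orthogonal (a : C₀(X, ℂ)) :
    ρ a ∘L ((HI ρ Y)ᗮ).subtypeL =
      ((HI ρ Y)ᗮ).subtypeL ∘L ρY (a.comp hY.subtypeValCocompactMap) := by
  ext v
  exact (hcompat _ a (fun _ => rfl) v).symm

theorem orthogonalProjectionOnto_HI_orthogonal_comp (a : C₀(X, ℂ)) :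
    Submodule.orthogonalProjectionOnto (HI ρ Y)ᗮ ∘L ρ a =
      ρY (a.comp hY.subtypeValCocompactMap) ∘L Submodule.orthogonalProjectionOnto (HI ρ Y)ᗮ :=
  Submodule.orthogonalProjectionOnto_comp_eq_of_comp_subtypeL _
    (comp_subtypeL_HI_orthogonal hY hcompat a)
    fun w hw => by
      rw [Submodule.orthogonal_orthogonal] at hw ⊢
      exact apply_mem_HI a hw

variable {T : ↥(HI ρ Y)ᗮ →L[ℂ] ↥(HI ρ Y)ᗮ}

theorem locallyCompactOp_subtypeL_comp_comp_orthogonalProjectionOnto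
    (hlc : LocallyCompactOp ρY T) :
    LocallyCompactOp ρ
      (((HI ρ Y)ᗮ).subtypeL ∘L T ∘L Submodule.orthogonalProjectionOnto (HI ρ Y)ᗮ) := by
  intro a
  constructor
  · rw [← comp_assoc, comp_subtypeL_HI_orthogonal hY hcompat, comp_assoc, ← comp_assoc (ρY _)]
    exact (hlc _).1.subtypeL_comp_comp_orthogonalProjectionOnto
  · rw [comp_assoc, comp_assoc, orthogonalProjectionOnto_HI_orthogonal_comp hY hcompat,
      ← comp_assoc T]
    exact (hlc _).2.subtypeL_comp_comp_orthogonalProjectionOnto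

theorem finitePropagation_subtypeL_comp_comp_orthogonalProjectionOnto
    (hfp : FinitePropagation ρY T) :
    FinitePropagation ρ
      (((HI ρ Y)ᗮ).subtypeL ∘L T ∘L Submodule.orthogonalProjectionOnto (HI ρ Y)ᗮ) := by
  obtain ⟨R, hR, hT⟩ := hfp
  refine ⟨R, hR, fun f g hfg => ?_⟩
  have hrestrict : ρY (f.comp hY.subtypeValCocompactMap) ∘L T ∘L
      ρY (g.comp hY.subtypeValCocompactMap) = 0 :=
    hT _ _ fun x hx y hy => hfg x hx y hy
  calc ρ f ∘L (((HI ρ Y)ᗮ).subtypeL ∘L T ∘L Submodule.orthogonalProjectionOnto (HI ρ Y)ᗮ) ∘L ρ g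
      = ((HI ρ Y)ᗮ).subtypeL ∘L (ρY (f.comp hY.subtypeValCocompactMap) ∘L T ∘L
          ρY (g.comp hY.subtypeValCocompactMap)) ∘L
          Submodule.orthogonalProjectionOnto (HI ρ Y)ᗮ := by
        simp only [comp_assoc, orthogonalProjectionOnto_HI_orthogonal_comp hY hcompat]
        simp only [← comp_assoc, comp_subtypeL_HI_orthogonal hY hcompat]
    _ = 0 := by rw [hrestrict, zero_comp, comp_zero]

end InducedRepresentation

theorem adV_locally_compact_finite_propagation_general
    (X : Type*) [MetricSpace X]
    (H : Type*) [NormedAddCommGroup H] [InnerProductSpace ℂ H] [CompleteSpace H]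
    (ρ : C₀(X, ℂ) →⋆ₙₐ[ℂ] (H →L[ℂ] H))
    (Y : Set X) (hY : IsClosed Y)
    (ρY : C₀(↥Y, ℂ) →⋆ₙₐ[ℂ] (↥(HI ρ Y)ᗮ →L[ℂ] ↥(HI ρ Y)ᗮ))
    (hcompat : ∀ (f : C₀(↥Y, ℂ)) (a : C₀(X, ℂ)), (∀ y : Y, f y = a y) →
      ∀ v : ↥(HI ρ Y)ᗮ, (ρY f v : H) = ρ a ↑v)
    (T : ↥(HI ρ Y)ᗮ →L[ℂ] ↥(HI ρ Y)ᗮ)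
    (hlc : LocallyCompactOp ρY T) (hfp : FinitePropagation ρY T) :
    LocallyCompactOp ρ
        (((HI ρ Y)ᗮ).subtypeL ∘L T ∘L Submodule.orthogonalProjection (HI ρ Y)ᗮ) ∧
    FinitePropagation ρ
        (((HI ρ Y)ᗮ).subtypeL ∘L T ∘L Submodule.orthogonalProjection (HI ρ Y)ᗮ) ∧
    (IsCompactOperator ⇑T →
      IsCompactOperator
        ⇑(((HI ρ Y)ᗮ).subtypeL ∘L T ∘L Submodule.orthogonalProjection (HI ρ Y)ᗮ)) :=
  ⟨locallyCompactOp_subtypeL_comp_comp_orthogonalProjectionOnto hY hcompat hlc,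
    finitePropagation_subtypeL_comp_comp_orthogonalProjectionOnto hY hcompat hfp,
    IsCompactOperator.subtypeL_comp_comp_orthogonalProjectionOnto⟩

/-- Let `X` be a proper metric space, `ρ : C₀(X) → B(H)` a nondegenerate
representation, and `Y ⊆ X` a closed subset with inclusion isometry `V : H_Y → H`. If
`T ∈ B(H_Y)` is locally compact and has finite propagation with respect to the induced
representation `ρ_Y : C₀(Y) → B(H_Y)`, then `Ad(V)(T) = V T V* ∈ B(H)` is locally compact and
has finite propagation with respect to `ρ`; moreover, if `T` is a compact operator then
`V T V*` is a compact operator. (Here `V = ((HI ρ Y)ᗮ).subtypeL` is the inclusion and its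
adjoint `V*` is the orthogonal projection of `H` onto `H_Y`.) -/
theorem adV_locally_compact_finite_propagation
    (X : Type*) [MetricSpace X] [ProperSpace X]
    (H : Type*) [NormedAddCommGroup H] [InnerProductSpace ℂ H] [CompleteSpace H]
    (ρ : C₀(X, ℂ) →⋆ₙₐ[ℂ] (H →L[ℂ] H)) (hρ : Nondegenerate ρ)
    (Y : Set X) (hY : IsClosed Y)
    (ρY : C₀(↥Y, ℂ) →⋆ₙₐ[ℂ] (↥(HI ρ Y)ᗮ →L[ℂ] ↥(HI ρ Y)ᗮ))
    (hcompat : ∀ (f : C₀(↥Y, ℂ)) (a : C₀(X, ℂ)), (∀ y : Y, f y = a y) →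
      ∀ v : ↥(HI ρ Y)ᗮ, (ρY f v : H) = ρ a ↑v)
    (T : ↥(HI ρ Y)ᗮ →L[ℂ] ↥(HI ρ Y)ᗮ)
    (hlc : LocallyCompactOp ρY T) (hfp : FinitePropagation ρY T) :
    LocallyCompactOp ρ
        (((HI ρ Y)ᗮ).subtypeL ∘L T ∘L Submodule.orthogonalProjection (HI ρ Y)ᗮ) ∧
    FinitePropagation ρ
        (((HI ρ Y)ᗮ).subtypeL ∘L T ∘L Submodule.orthogonalProjection (HI ρ Y)ᗮ) ∧
    (IsCompactOperator ⇑T →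
      IsCompactOperator
        ⇑(((HI ρ Y)ᗮ).subtypeL ∘L T ∘L Submodule.orthogonalProjection (HI ρ Y)ᗮ)) :=
  adV_locally_compact_finite_propagation_general X H ρ Y hY ρY hcompat T hlc hfp
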